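/- arXiv:2510.04473 — 2 statements merged into one kernel-verified Lean document; each statement's English description precedes it below -/
import Mathlib

section
/- Let f : EuclideanSpace ℝ (Fin n) → ℝ be differentiable, bounded below by f_low, with ∇f Lipschitz continuous with constant L_g. Consider iterates of the IBO trust-region algorithm: sequences x_k ∈ EuclideanSpace ℝ (Fin n), Δ_k > 0 with Δ_0 > 0 given, quadratic models m_k about x_k with data (c_k, g_k, H_k), H_k symmetric with ‖H_k‖ ≤ κ_H − 1 for some κ_H ≥ 1, each m_k fully linear for f in B(x_k, Δ_k) with constants κ_mf, κ_mg > 0 independent of k, and steps s_k with ‖s_k‖ ≤ Δ_k and m_k(x_k) − m_k(x_k + s_k) ≥ κ_s·‖g_k‖·min(Δ_k, ‖g_k‖/(‖H_k‖ + 1)) for some κ_s ∈ (0, 1/2); with ρ_k := (f(x_k) − f(x_k + s_k))/(m_k(x_k) − m_k(x_k + s_k)), the updates are: if ρ_k ≥ η_S and ‖g_k‖ ≥ μ_c·Δ_k then x_{k+1} = x_k + s_k and Δ_{k+1} = γ_inc·Δ_k; otherwise if ρ_k ≥ η_U and ‖g_k‖ ≥ μ_c·Δ_k then x_{k+1} =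 x_k + s_k and Δ_{k+1} = Δ_k; otherwise x_{k+1} = x_k and Δ_{k+1} = γ_dec·Δ_k, where 0 < γ_dec < 1 < γ_inc, 0 < η_U ≤ η_S < 1, μ_c > 0. If ε > 0 and ‖∇f(x_k)‖ ≥ ε for all k = 0, …, K−1, then Δ_k ≥ Δ_min(ε) for all k = 0, …, K, where Δ_min(ε) := min(Δ_0, γ_dec·ε/(max(2κ_mf/(κ_s·(1 − η_S)), κ_H, μ_c) + κ_mg), ε/((1 + κ_mg/μ_c)·κ_H)). -/
/-!
While `‖∇f(x_k)‖ ≥ ε` and `Δ_k ≤ ε / (M + κ_mg)` with `M = max(2 κ_mf / (κ_s (1 - η_S)), κ_H, μ_c)`,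
full linearity gives `‖g_k‖ ≥ M Δ_k`. Then the Cauchy decrease `κ_s ‖g_k‖ Δ_k` of the model
dominates the error `2 κ_mf Δ_k²` between model and function decrease, so `ρ_k ≥ η_S` and the
iteration is very successful. Hence the radius only shrinks, by the factor `γ_dec`, from above the
threshold `ε / (M + κ_mg)`.
-/

open scoped RealInnerProductSpace
open Metric

noncomputable section

/-- Matrix–vector multiplication as a map on Euclidean space. -/
def mulVecE {n : ℕ} (H : Matrix (Fin n) (Fin n) ℝ) (v : EuclideanSpace ℝ (Fin n)) :
    EuclideanSpace ℝ (Fin n) :=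
  (EuclideanSpace.equiv (Fin n) ℝ).symm (H.mulVec (EuclideanSpace.equiv (Fin n) ℝ v))

/-- Operator 2-norm of a matrix (the norm induced by the Euclidean vector norm). -/
def opNorm {n : ℕ} (H : Matrix (Fin n) (Fin n) ℝ) : ℝ :=
  sSup {r : ℝ | ∃ v : EuclideanSpace ℝ (Fin n), ‖v‖ ≤ 1 ∧ r = ‖mulVecE H v‖}

/-- Quadratic model about `x` with data `(c, g, H)`. -/
def qm {n : ℕ} (x : EuclideanSpace ℝ (Fin n)) (c : ℝ) (g : EuclideanSpace ℝ (Fin n))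
    (H : Matrix (Fin n) (Fin n) ℝ) (y : EuclideanSpace ℝ (Fin n)) : ℝ :=
  c + ⟪g, y - x⟫ + (1 / 2) * ⟪y - x, mulVecE H (y - x)⟫

/-- `m` is a fully linear model for `f` on the closed ball `B(x, Δ)`. -/
def IsFullyLinear {n : ℕ} (f m : EuclideanSpace ℝ (Fin n) → ℝ)
    (x : EuclideanSpace ℝ (Fin n)) (Δ κmf κmg : ℝ) : Prop :=
  ∀ y ∈ closedBall x Δ,
    |m y - f y| ≤ κmf * Δ ^ 2 ∧ ‖gradient m y - gradient f y‖ ≤ κmg * Δ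

/-- `m` is a fully quadratic model for `f` on the closed ball `B(x, Δ)`. -/
def IsFullyQuadratic {n : ℕ} (f m : EuclideanSpace ℝ (Fin n) → ℝ)
    (x : EuclideanSpace ℝ (Fin n)) (Δ κmf κmg κmh : ℝ) : Prop :=
  ∀ y ∈ closedBall x Δ,
    |m y - f y| ≤ κmf * Δ ^ 3 ∧ ‖gradient m y - gradient f y‖ ≤ κmg * Δ ^ 2 ∧
      ‖fderiv ℝ (gradient m) y - fderiv ℝ (gradient f) y‖ ≤ κmh * Δ

/-- Smallest eigenvalue of a symmetric matrix: the minimum of `⟪u, H u⟫` over unit vectors. -/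
def lambdaMin {n : ℕ} (H : Matrix (Fin n) (Fin n) ℝ) : ℝ :=
  sInf {r : ℝ | ∃ u : EuclideanSpace ℝ (Fin n), ‖u‖ = 1 ∧ r = ⟪u, mulVecE H u⟫}

/-- `τ(H) = max(-λ_min(H), 0)`. -/
def tau {n : ℕ} (H : Matrix (Fin n) (Fin n) ℝ) : ℝ := max (-lambdaMin H) 0

/-- Hessian matrix of `f` at `x`. -/
def hessMat {n : ℕ} (f : EuclideanSpace ℝ (Fin n) → ℝ) (x : EuclideanSpace ℝ (Fin n)) :
    Matrix (Fin n) (Fin n) ℝ :=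
  Matrix.of fun i j => fderiv ℝ (gradient f) x (EuclideanSpace.single j 1) i

/-- ℓ∞ operator norm of a matrix: the maximum absolute row sum. -/
def linftyNorm {m k : Type*} [Fintype m] [Fintype k] (A : Matrix m k ℝ) : ℝ :=
  sSup (Set.range fun i => ∑ j, |A i j|)

theorem hasGradientAt_qm_self {n : ℕ} (x : EuclideanSpace ℝ (Fin n)) (c : ℝ)
    (g : EuclideanSpace ℝ (Fin n)) (H : Matrix (Fin n) (Fin n) ℝ) :
    HasGradientAt (qm x c g H) g x := by
  rw [hasGradientAt_iff_hasFDerivAt]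
  have hu : HasFDerivAt (fun y : EuclideanSpace ℝ (Fin n) => y - x)
      (ContinuousLinearMap.id ℝ _) x := (hasFDerivAt_id x).sub_const x
  have hquad := hu.inner ℝ ((Matrix.toEuclideanCLM (𝕜 := ℝ) H).hasFDerivAt.comp x hu)
  refine (((hasFDerivAt_const c x).add ((hasFDerivAt_const g x).inner ℝ hu)).add
    (hquad.const_mul (1 / 2 : ℝ))).congr_fderiv ?_
  ext v
  simp [fderivInnerCLM_apply]

theorem opNorm_nonneg {n : ℕ} (H : Matrix (Fin n) (Fin n) ℝ) : 0 ≤ opNorm H :=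
  Real.sSup_nonneg fun _ ⟨_, _, hr⟩ => hr ▸ norm_nonneg _

theorem ratio_ge_of_decrease_ge {κs κmf η G Δ D A M : ℝ} (hκs : 0 < κs) (hη : η < 1)
    (hΔ : 0 < Δ) (hM : 2 * κmf / (κs * (1 - η)) ≤ M) (hM0 : 0 < M) (hG : M * Δ ≤ G)
    (hD : κs * G * Δ ≤ D) (hA : D - 2 * κmf * Δ ^ 2 ≤ A) : η ≤ A / D := by
  have hη' : 0 < 1 - η := by linarith
  have hMG : κs * (M * Δ) * Δ ≤ D := le_trans (by gcongr) hD
  have hD0 : 0 < D := lt_of_lt_of_le (by positivity) hMG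
  have hκmf : 2 * κmf ≤ κs * (1 - η) * M := (div_le_iff₀' (by positivity)).1 hM
  have herr : 2 * κmf * Δ ^ 2 ≤ (1 - η) * D :=
    calc 2 * κmf * Δ ^ 2 ≤ κs * (1 - η) * M * Δ ^ 2 := by gcongr
      _ = (1 - η) * (κs * (M * Δ) * Δ) := by ring
      _ ≤ (1 - η) * D := by gcongr
  rw [le_div_iff₀ hD0]
  linarith

section FullyLinear

variable {n : ℕ} {f m : EuclideanSpace ℝ (Fin n) → ℝ} {x : EuclideanSpace ℝ (Fin n)}
  {Δ κmf κmg : ℝ}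

theorem IsFullyLinear.norm_gradient_le (hFL : IsFullyLinear f m x Δ κmf κmg) (hΔ : 0 ≤ Δ) :
    ‖gradient f x‖ ≤ ‖gradient m x‖ + κmg * Δ := by
  have := (hFL x (mem_closedBall_self hΔ)).2
  linarith [norm_le_norm_add_norm_sub' (gradient f x) (gradient m x),
    norm_sub_rev (gradient f x) (gradient m x)]

theorem IsFullyLinear.sub_le_sub (hFL : IsFullyLinear f m x Δ κmf κmg)
    {s : EuclideanSpace ℝ (Fin n)} (hs : ‖s‖ ≤ Δ) :
    m x - m (x + s) - 2 * κmf * Δ ^ 2 ≤ f x - f (x + s) := by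
  have hx := abs_le.1 (hFL x (mem_closedBall_self ((norm_nonneg s).trans hs))).1
  have hxs := abs_le.1 (hFL (x + s) (by simpa [mem_closedBall, dist_eq_norm] using hs)).1
  linarith [hx.1, hxs.2]

theorem IsFullyLinear.le_reduction_ratio (hFL : IsFullyLinear f m x Δ κmf κmg)
    {s : EuclideanSpace ℝ (Fin n)} {κs η G h M : ℝ} (hs : ‖s‖ ≤ Δ) (hΔ : 0 < Δ)
    (hκs : 0 < κs) (hη : η < 1) (hh : 0 ≤ h) (hhM : h + 1 ≤ M)
    (hκmfM : 2 * κmf / (κs * (1 - η)) ≤ M) (hG : M * Δ ≤ G)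
    (hdec : κs * G * min Δ (G / (h + 1)) ≤ m x - m (x + s)) :
    η ≤ (f x - f (x + s)) / (m x - m (x + s)) := by
  have hmin : min Δ (G / (h + 1)) = Δ :=
    min_eq_left <| (le_div_iff₀ (by linarith)).2 <|
      (mul_comm Δ _).trans_le <| (mul_le_mul_of_nonneg_right hhM hΔ.le).trans hG
  rw [hmin] at hdec
  exact ratio_ge_of_decrease_ge hκs hη hΔ hκmfM (by linarith) hG hdec (hFL.sub_le_sub hs)

end FullyLinear

theorem min_le_of_radius_update {Δ : ℕ → ℝ} {γ T : ℝ} {K : ℕ} (hγ : 0 ≤ γ)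
    (hstep : ∀ k < K, Δ k ≤ Δ (k + 1) ∨ (T < Δ k ∧ γ * Δ k ≤ Δ (k + 1))) :
    ∀ k ≤ K, min (Δ 0) (γ * T) ≤ Δ k := by
  intro k hk
  induction k with
  | zero => exact min_le_left _ _
  | succ k ih =>
    rcases hstep k hk with hinc | ⟨hT, hdec⟩
    · exact (ih (k.le_succ.trans hk)).trans hinc
    · exact (min_le_right _ _).trans <| (mul_le_mul_of_nonneg_left hT.le hγ).trans hdec

theorem delta_lower_bound_before_accuracy_general {n : ℕ}
    (f : EuclideanSpace ℝ (Fin n) → ℝ)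
    (x : ℕ → EuclideanSpace ℝ (Fin n)) (Δ : ℕ → ℝ) (hΔpos : ∀ k, 0 < Δ k)
    (cm : ℕ → ℝ) (g : ℕ → EuclideanSpace ℝ (Fin n))
    (H : ℕ → Matrix (Fin n) (Fin n) ℝ)
    (κH : ℝ) (hHnorm : ∀ k, opNorm (H k) ≤ κH - 1)
    (m : ℕ → EuclideanSpace ℝ (Fin n) → ℝ)
    (hm : ∀ k y, m k y = qm (x k) (cm k) (g k) (H k) y)
    (κmf κmg : ℝ) (hκmg : 0 < κmg)
    (hFL : ∀ k, IsFullyLinear f (m k) (x k) (Δ k) κmf κmg)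
    (s : ℕ → EuclideanSpace ℝ (Fin n)) (hs : ∀ k, ‖s k‖ ≤ Δ k)
    (κs : ℝ) (hκs : κs ∈ Set.Ioo (0 : ℝ) (1 / 2))
    (hdec : ∀ k, κs * ‖g k‖ * min (Δ k) (‖g k‖ / (opNorm (H k) + 1)) ≤
      m k (x k) - m k (x k + s k))
    (γdec γinc ηU ηS μc : ℝ)
    (hγdec0 : 0 < γdec) (hγinc : 1 < γinc)
    (hηS : ηS < 1)
    (ρ : ℕ → ℝ)
    (hρ : ∀ k, ρ k = (f (x k) - f (x k + s k)) / (m k (x k) - m k (x k + s k)))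
    (hVS : ∀ k, (ηS ≤ ρ k ∧ μc * Δ k ≤ ‖g k‖) →
      x (k + 1) = x k + s k ∧ Δ (k + 1) = γinc * Δ k)
    (hS : ∀ k, ¬(ηS ≤ ρ k ∧ μc * Δ k ≤ ‖g k‖) → (ηU ≤ ρ k ∧ μc * Δ k ≤ ‖g k‖) →
      x (k + 1) = x k + s k ∧ Δ (k + 1) = Δ k)
    (hU : ∀ k, ¬(ηU ≤ ρ k ∧ μc * Δ k ≤ ‖g k‖) →
      x (k + 1) = x k ∧ Δ (k + 1) = γdec * Δ k)
    (ε : ℝ) (K : ℕ)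
    (hgrad : ∀ k < K, ε ≤ ‖gradient f (x k)‖)
    (Δmin : ℝ)
    (hΔmin : Δmin = min (Δ 0)
      (min (γdec * ε / (max (max (2 * κmf / (κs * (1 - ηS))) κH) μc + κmg))
        (ε / ((1 + κmg / μc) * κH)))) :
    ∀ k ≤ K, Δmin ≤ Δ k := by
  set M := max (max (2 * κmf / (κs * (1 - ηS))) κH) μc
  have hκmfM : 2 * κmf / (κs * (1 - ηS)) ≤ M := (le_max_left _ _).trans (le_max_left _ _)
  have hκHM : κH ≤ M := (le_max_right _ _).trans (le_max_left _ _)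
  have hMκmg : 0 < M + κmg := by linarith [opNorm_nonneg (H 0), hHnorm 0]
  have hstep (k) (hk : k < K) :
      Δ k ≤ Δ (k + 1) ∨ (ε / (M + κmg) < Δ k ∧ γdec * Δ k ≤ Δ (k + 1)) := by
    by_cases hVSk : ηS ≤ ρ k ∧ μc * Δ k ≤ ‖g k‖
    · exact .inl <| (hVS k hVSk).2 ▸ le_mul_of_one_le_left (hΔpos k).le hγinc.le
    by_cases hSk : ηU ≤ ρ k ∧ μc * Δ k ≤ ‖g k‖
    · exact .inl (hS k hVSk hSk).2.ge
    refine .inr ⟨lt_of_not_ge fun hsmall => hVSk ?_, (hU k hSk).2.ge⟩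
    have hgk : gradient (m k) (x k) = g k := by
      rw [funext (hm k)]; exact (hasGradientAt_qm_self ..).gradient
    have hG : M * Δ k ≤ ‖g k‖ := by
      have := hgk ▸ (hFL k).norm_gradient_le (hΔpos k).le
      rw [le_div_iff₀ hMκmg] at hsmall
      linarith [hgrad k hk]
    refine ⟨hρ k ▸ (hFL k).le_reduction_ratio (hs k) (hΔpos k) hκs.1 hηS (opNorm_nonneg _)
      (by linarith [hHnorm k]) hκmfM hG (hdec k), ?_⟩
    exact (mul_le_mul_of_nonneg_right (le_max_right _ _) (hΔpos k).le).trans hG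
  intro k hk
  refine le_trans ?_ (min_le_of_radius_update hγdec0.le hstep k hk)
  rw [hΔmin, mul_div_assoc]
  exact min_le_min_left _ (min_le_left _ _)

/-- Trust-region radius lower bound for the IBO trust-region method before reaching
first-order accuracy `ε` (Lemma `lem_delta_min_dfo`). -/
theorem delta_lower_bound_before_accuracy {n : ℕ}
    (f : EuclideanSpace ℝ (Fin n) → ℝ) (hf : Differentiable ℝ f)
    (flow : ℝ) (hflow : ∀ y, flow ≤ f y)
    (Lg : NNReal) (hLip : LipschitzWith Lg (gradient f))
    (x : ℕ → EuclideanSpace ℝ (Fin n)) (Δ : ℕ → ℝ) (hΔpos : ∀ k, 0 < Δ k)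
    (cm : ℕ → ℝ) (g : ℕ → EuclideanSpace ℝ (Fin n))
    (H : ℕ → Matrix (Fin n) (Fin n) ℝ) (hHsymm : ∀ k, (H k).IsSymm)
    (κH : ℝ) (hκH : 1 ≤ κH) (hHnorm : ∀ k, opNorm (H k) ≤ κH - 1)
    (m : ℕ → EuclideanSpace ℝ (Fin n) → ℝ)
    (hm : ∀ k y, m k y = qm (x k) (cm k) (g k) (H k) y)
    (κmf κmg : ℝ) (hκmf : 0 < κmf) (hκmg : 0 < κmg)
    (hFL : ∀ k, IsFullyLinear f (m k) (x k) (Δ k) κmf κmg)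
    (s : ℕ → EuclideanSpace ℝ (Fin n)) (hs : ∀ k, ‖s k‖ ≤ Δ k)
    (κs : ℝ) (hκs : κs ∈ Set.Ioo (0 : ℝ) (1 / 2))
    (hdec : ∀ k, κs * ‖g k‖ * min (Δ k) (‖g k‖ / (opNorm (H k) + 1)) ≤
      m k (x k) - m k (x k + s k))
    (γdec γinc ηU ηS μc : ℝ)
    (hγdec0 : 0 < γdec) (hγdec1 : γdec < 1) (hγinc : 1 < γinc)
    (hηU : 0 < ηU) (hηUS : ηU ≤ ηS) (hηS : ηS < 1) (hμc : 0 < μc)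
    (ρ : ℕ → ℝ)
    (hρ : ∀ k, ρ k = (f (x k) - f (x k + s k)) / (m k (x k) - m k (x k + s k)))
    (hVS : ∀ k, (ηS ≤ ρ k ∧ μc * Δ k ≤ ‖g k‖) →
      x (k + 1) = x k + s k ∧ Δ (k + 1) = γinc * Δ k)
    (hS : ∀ k, ¬(ηS ≤ ρ k ∧ μc * Δ k ≤ ‖g k‖) → (ηU ≤ ρ k ∧ μc * Δ k ≤ ‖g k‖) →
      x (k + 1) = x k + s k ∧ Δ (k + 1) = Δ k)
    (hU : ∀ k, ¬(ηU ≤ ρ k ∧ μc * Δ k ≤ ‖g k‖) →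
      x (k + 1) = x k ∧ Δ (k + 1) = γdec * Δ k)
    (ε : ℝ) (hε : 0 < ε) (K : ℕ)
    (hgrad : ∀ k < K, ε ≤ ‖gradient f (x k)‖)
    (Δmin : ℝ)
    (hΔmin : Δmin = min (Δ 0)
      (min (γdec * ε / (max (max (2 * κmf / (κs * (1 - ηS))) κH) μc + κmg))
        (ε / ((1 + κmg / μc) * κH)))) :
    ∀ k ≤ K, Δmin ≤ Δ k :=
  delta_lower_bound_before_accuracy_general f x Δ hΔpos cm g H κH hHnorm m hm κmf κmg hκmg hFL s hs
    κs hκs hdec γdec γinc ηU ηS μc hγdec0 hγinc hηS ρ hρ hVS hS hU ε K hgrad Δmin hΔmin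
end
end

section
/- Let f : EuclideanSpace ℝ (Fin n) → ℝ be twice continuously differentiable, let x ∈ EuclideanSpace ℝ (Fin n), and let 0 < Δ ≤ Δ_max. Let m be a quadratic model about x with data (c, g, H), H symmetric, which is fully quadratic for f in B(x,Δ) with constants κ_mf, κ_mg, κ_mh > 0. Set κ_σ := max(κ_mg·Δ_max, κ_mh). Then ‖g − ∇f(x)‖ ≤ κ_σ·Δ, |τ(H) − τ(∇²f(x))| ≤ κ_σ·Δ, and |max(‖g‖, τ(H)) − max(‖∇f(x)‖, τ(∇²f(x)))| ≤ κ_σ·Δ, where ∇²f(x) denotes the Hessian matrix of f at x. -/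
open scoped RealInnerProductSpace
open Metric

noncomputable section

/-!
At the centre `x` the model's gradient and Hessian are `g` and `H`, so the fully quadratic
bounds at `y = x` give `‖g - ∇f x‖ ≤ κmg Δ² ≤ κmg Δmax Δ` and `‖H - ∇²f x‖ ≤ κmh Δ` in operator
norm. As an infimum of the quadratic forms `⟪u, · u⟫` over the unit sphere, `λ_min` is 1-Lipschitz
for the operator norm, hence so is `τ = max (-λ_min) 0`; the combined measure follows from
`|max a b - max c d| ≤ max |a - c| |b - d|`.
-/

open Matrix

theorem abs_iInf_sub_iInf_le {ι : Type*} {f g : ι → ℝ} {ε : ℝ} (hε : 0 ≤ ε)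
    (hf : BddBelow (Set.range f)) (hg : BddBelow (Set.range g)) (hfg : ∀ i, |f i - g i| ≤ ε) :
    |(⨅ i, f i) - ⨅ i, g i| ≤ ε := by
  cases isEmpty_or_nonempty ι
  · simpa using hε
  refine abs_sub_le_iff.mpr ⟨?_, ?_⟩
  · have : ∀ i, (⨅ i, f i) - ε ≤ g i := fun i => by
      linarith [ciInf_le hf i, (abs_sub_le_iff.mp (hfg i)).1]
    linarith [le_ciInf this]
  · have : ∀ i, (⨅ i, g i) - ε ≤ f i := fun i => by
      linarith [ciInf_le hg i, (abs_sub_le_iff.mp (hfg i)).2]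
    linarith [le_ciInf this]

section InnerProductSpace

variable {E : Type*} [NormedAddCommGroup E] [InnerProductSpace ℝ E]

theorem abs_inner_apply_self_le_opNorm (T : E →L[ℝ] E) {u : E} (hu : ‖u‖ = 1) :
    |⟪u, T u⟫| ≤ ‖T‖ :=
  calc |⟪u, T u⟫| ≤ ‖u‖ * ‖T u‖ := abs_real_inner_le_norm _ _
    _ ≤ ‖u‖ * (‖T‖ * ‖u‖) := by gcongr; exact T.le_opNorm u
    _ = ‖T‖ := by rw [hu, one_mul, mul_one]

theorem bddBelow_range_inner_apply_self_sphere (T : E →L[ℝ] E) :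
    BddBelow (Set.range fun u : Metric.sphere (0 : E) 1 => ⟪(u : E), T u⟫) := by
  refine ⟨-‖T‖, ?_⟩
  rintro _ ⟨u, rfl⟩
  exact neg_le_of_abs_le (abs_inner_apply_self_le_opNorm T (mem_sphere_zero_iff_norm.mp u.2))

end InnerProductSpace

section Matrix

variable {n : ℕ}

theorem mulVecE_eq_toEuclideanCLM (H : Matrix (Fin n) (Fin n) ℝ)
    (v : EuclideanSpace ℝ (Fin n)) :
    mulVecE H v = toEuclideanCLM (𝕜 := ℝ) H v := rfl

theorem lambdaMin_eq_iInf (H : Matrix (Fin n) (Fin n) ℝ) :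
    lambdaMin H = ⨅ u : Metric.sphere (0 : EuclideanSpace ℝ (Fin n)) 1,
      ⟪(u : EuclideanSpace ℝ (Fin n)), toEuclideanCLM (𝕜 := ℝ) H u⟫ := by
  unfold lambdaMin
  congr 1
  ext r
  simp [mulVecE_eq_toEuclideanCLM, eq_comm]

theorem abs_lambdaMin_sub_lambdaMin_le (A B : Matrix (Fin n) (Fin n) ℝ) :
    |lambdaMin A - lambdaMin B| ≤ ‖toEuclideanCLM (𝕜 := ℝ) A - toEuclideanCLM (𝕜 := ℝ) B‖ := by
  rw [lambdaMin_eq_iInf, lambdaMin_eq_iInf]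
  refine abs_iInf_sub_iInf_le (by positivity) (bddBelow_range_inner_apply_self_sphere _)
    (bddBelow_range_inner_apply_self_sphere _) fun u => ?_
  rw [← inner_sub_right, ← _root_.sub_apply]
  exact abs_inner_apply_self_le_opNorm _ (mem_sphere_zero_iff_norm.mp u.2)

theorem abs_tau_sub_tau_le (A B : Matrix (Fin n) (Fin n) ℝ) :
    |tau A - tau B| ≤ ‖toEuclideanCLM (𝕜 := ℝ) A - toEuclideanCLM (𝕜 := ℝ) B‖ :=
  calc |tau A - tau B| ≤ max |-lambdaMin A - -lambdaMin B| |(0 : ℝ) - 0| :=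
        abs_max_sub_max_le_max _ _ _ _
    _ = |lambdaMin A - lambdaMin B| := by
        rw [sub_self, abs_zero, neg_sub_neg, abs_sub_comm, max_eq_left (abs_nonneg _)]
    _ ≤ _ := abs_lambdaMin_sub_lambdaMin_le A B

theorem toEuclideanCLM_hessMat (f : EuclideanSpace ℝ (Fin n) → ℝ)
    (x : EuclideanSpace ℝ (Fin n)) :
    toEuclideanCLM (𝕜 := ℝ) (hessMat f x) = fderiv ℝ (gradient f) x := by
  rw [← StarAlgEquiv.eq_symm_apply]
  ext i j
  simp [toEuclideanCLM, hessMat, LinearMap.toMatrix_apply]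

theorem inner_toEuclideanCLM_comm_of_isSymm {H : Matrix (Fin n) (Fin n) ℝ} (hH : H.IsSymm)
    (u v : EuclideanSpace ℝ (Fin n)) :
    ⟪toEuclideanCLM (𝕜 := ℝ) H u, v⟫ = ⟪u, toEuclideanCLM (𝕜 := ℝ) H v⟫ := by
  have hHerm : H.IsHermitian := by
    rwa [Matrix.IsHermitian, Matrix.conjTranspose_eq_transpose_of_trivial]
  exact (Matrix.isSymmetric_toEuclideanLin_iff.mpr hHerm) u v

theorem hasGradientAt_qm {H : Matrix (Fin n) (Fin n) ℝ} (hH : H.IsSymm)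
    (x : EuclideanSpace ℝ (Fin n)) (c : ℝ) (g y : EuclideanSpace ℝ (Fin n)) :
    HasGradientAt (qm x c g H) (g + toEuclideanCLM (𝕜 := ℝ) H (y - x)) y := by
  set T := toEuclideanCLM (𝕜 := ℝ) H
  rw [hasGradientAt_iff_hasFDerivAt]
  have hsub := (hasFDerivAt_id (𝕜 := ℝ) y).sub_const x
  have hlin := ((innerSL ℝ g).hasFDerivAt).comp y hsub
  have hquad := hsub.inner ℝ (T.hasFDerivAt.comp y hsub)
  refine (((hasFDerivAt_const c y).add hlin).add (hquad.const_mul (1 / 2 : ℝ))).congr_fderiv ?_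
  ext v
  have hsymm : ⟪y - x, T v⟫ = ⟪T (y - x), v⟫ := (inner_toEuclideanCLM_comm_of_isSymm hH _ _).symm
  simp only [ContinuousLinearMap.comp_id, zero_add, one_div, id_eq, Function.comp_apply, map_sub,
    _root_.add_apply, coe_innerSL_apply, real_inner_comm v, _root_.smul_apply,
    ContinuousLinearMap.comp_apply, ContinuousLinearMap.prod_apply, ContinuousLinearMap.id_apply,
    fderivInnerCLM_apply, hsymm, inner_sub_right, smul_eq_mul, map_add,
    InnerProductSpace.toDual_apply_apply, _root_.sub_apply, add_right_inj]
  ring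

theorem gradient_qm {H : Matrix (Fin n) (Fin n) ℝ} (hH : H.IsSymm)
    (x : EuclideanSpace ℝ (Fin n)) (c : ℝ) (g : EuclideanSpace ℝ (Fin n)) :
    gradient (qm x c g H) = fun y => g + toEuclideanCLM (𝕜 := ℝ) H (y - x) :=
  funext fun y => (hasGradientAt_qm hH x c g y).gradient

theorem gradient_qm_self {H : Matrix (Fin n) (Fin n) ℝ} (hH : H.IsSymm)
    (x : EuclideanSpace ℝ (Fin n)) (c : ℝ) (g : EuclideanSpace ℝ (Fin n)) :
    gradient (qm x c g H) x = g := by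
  simp [gradient_qm hH]

theorem fderiv_gradient_qm {H : Matrix (Fin n) (Fin n) ℝ} (hH : H.IsSymm)
    (x : EuclideanSpace ℝ (Fin n)) (c : ℝ) (g y : EuclideanSpace ℝ (Fin n)) :
    fderiv ℝ (gradient (qm x c g H)) y = toEuclideanCLM (𝕜 := ℝ) H := by
  rw [gradient_qm hH]
  exact ((toEuclideanCLM (𝕜 := ℝ) H).hasFDerivAt.comp y
    ((hasFDerivAt_id y).sub_const x)).const_add g |>.fderiv

end Matrix

theorem criticality_measures_error_general {n : ℕ}
    (f : EuclideanSpace ℝ (Fin n) → ℝ)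
    (x : EuclideanSpace ℝ (Fin n)) (Δ Δmax : ℝ) (hΔ : 0 < Δ) (hΔmax : Δ ≤ Δmax)
    (c : ℝ) (g : EuclideanSpace ℝ (Fin n)) (H : Matrix (Fin n) (Fin n) ℝ)
    (hHsymm : H.IsSymm)
    (m : EuclideanSpace ℝ (Fin n) → ℝ) (hm : ∀ y, m y = qm x c g H y)
    (κmf κmg κmh : ℝ) (hκmg : 0 < κmg)
    (hFQ : IsFullyQuadratic f m x Δ κmf κmg κmh)
    (κσ : ℝ) (hκσ : κσ = max (κmg * Δmax) κmh) :
    ‖g - gradient f x‖ ≤ κσ * Δ ∧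
      |tau H - tau (hessMat f x)| ≤ κσ * Δ ∧
      |max ‖g‖ (tau H) - max ‖gradient f x‖ (tau (hessMat f x))| ≤ κσ * Δ := by
  obtain rfl : m = qm x c g H := funext hm
  obtain ⟨-, hgrad, hhess⟩ := hFQ x (mem_closedBall_self hΔ.le)
  rw [gradient_qm_self hHsymm] at hgrad
  rw [fderiv_gradient_qm hHsymm, ← toEuclideanCLM_hessMat] at hhess
  have hg : ‖g - gradient f x‖ ≤ κσ * Δ :=
    calc ‖g - gradient f x‖ ≤ κmg * Δ * Δ := by rwa [mul_assoc, ← sq]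
      _ ≤ κmg * Δmax * Δ := by gcongr
      _ ≤ κσ * Δ := by rw [hκσ]; gcongr; exact le_max_left _ _
  have hτ : |tau H - tau (hessMat f x)| ≤ κσ * Δ :=
    calc |tau H - tau (hessMat f x)| ≤ κmh * Δ := (abs_tau_sub_tau_le _ _).trans hhess
      _ ≤ κσ * Δ := by rw [hκσ]; gcongr; exact le_max_right _ _
  refine ⟨hg, hτ, (abs_max_sub_max_le_max _ _ _ _).trans (max_le ?_ hτ)⟩
  exact (abs_norm_sub_norm_le _ _).trans hg

/-- A fully quadratic model gives accurate first- and second-order criticality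
measures (Lemma `lem_dfo_2_crit_measures`). -/
theorem criticality_measures_error {n : ℕ}
    (f : EuclideanSpace ℝ (Fin n) → ℝ) (hf : ContDiff ℝ 2 f)
    (x : EuclideanSpace ℝ (Fin n)) (Δ Δmax : ℝ) (hΔ : 0 < Δ) (hΔmax : Δ ≤ Δmax)
    (c : ℝ) (g : EuclideanSpace ℝ (Fin n)) (H : Matrix (Fin n) (Fin n) ℝ)
    (hHsymm : H.IsSymm)
    (m : EuclideanSpace ℝ (Fin n) → ℝ) (hm : ∀ y, m y = qm x c g H y)
    (κmf κmg κmh : ℝ) (hκmf : 0 < κmf) (hκmg : 0 < κmg) (hκmh : 0 < κmh)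
    (hFQ : IsFullyQuadratic f m x Δ κmf κmg κmh)
    (κσ : ℝ) (hκσ : κσ = max (κmg * Δmax) κmh) :
    ‖g - gradient f x‖ ≤ κσ * Δ ∧
      |tau H - tau (hessMat f x)| ≤ κσ * Δ ∧
      |max ‖g‖ (tau H) - max ‖gradient f x‖ (tau (hessMat f x))| ≤ κσ * Δ :=
  criticality_measures_error_general f x Δ Δmax hΔ hΔmax c g H hHsymm m hm κmf κmg κmh hκmg hFQ κσ
    hκσ
end
end
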